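/- For every integer k ≥ 1 there exists a polynomial Q_k(x, y) ∈ ℂ[x, y] of total degree k + 1 such that Q_k(y³, y) = (y + 1)^{3k} for all y ∈ ℂ; explicitly Q_k(x, y) = Σ_{j=0}^{3k} binom(3k, j) x^{⌊j/3⌋} y^{r_j}, where r_j = j − 3⌊j/3⌋ ∈ {0, 1, 2}, and its leading term is 3k·x^{k−1}y². Consequently, for X = {(x,y) ∈ ℂ² : x = y³} and η(x, y) = log|1 + y|, the function ψ_k = (1/(3k)) log|Q_k| belongs to 𝓛_{(k+1)/(3k)}(ℂ²) and satisfies ψ_k = η on X. -/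

import Mathlib

open Set Filter
open scoped Real Topology

noncomputable section

/-- `ℂⁿ`. -/
abbrev Cn (n : ℕ) : Type := Fin n → ℂ

/-- Euclidean norm on `ℂⁿ`. -/
def enorm2 {n : ℕ} (z : Cn n) : ℝ := Real.sqrt (∑ i, ‖z i‖ ^ 2)

/-- `log⁺` of the euclidean norm. -/
def logPlusNorm {n : ℕ} (z : Cn n) : ℝ := max (Real.log (enorm2 z)) 0

/-- Truncation `max (u z) (-m)`, as a real number. -/
def trunc {n : ℕ} (u : Cn n → EReal) (m : ℕ) (z : Cn n) : ℝ :=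
  ((u z) ⊔ ((-(m : ℝ) : ℝ) : EReal)).toReal

/-- The closed disc of radius `r` through `a` in the complex direction `b`. -/
def closedDisc {n : ℕ} (a b : Cn n) (r : ℝ) : Set (Cn n) :=
  {z | ∃ t : ℂ, ‖t‖ ≤ r ∧ z = a + t • b}

/-- `u` is plurisubharmonic on the open set `s ⊆ ℂⁿ`:  upper semicontinuous, with values in
`[-∞, ∞)`, not `≡ -∞` on any nonempty open subset, and satisfying the sub-mean value
inequality on every complex disc contained in `s` (expressed via all truncations). -/
structure PshOn {n : ℕ} (u : Cn n → EReal) (s : Set (Cn n)) : Prop where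
  isOpen : IsOpen s
  usc : UpperSemicontinuousOn u s
  ne_top : ∀ z ∈ s, u z ≠ ⊤
  nowhere_bot : ∀ V : Set (Cn n), IsOpen V → V ⊆ s → V.Nonempty → ∃ z ∈ V, u z ≠ ⊥
  submean : ∀ a ∈ s, ∀ (b : Cn n) (r : ℝ), 0 < r → closedDisc a b r ⊆ s →
    ∀ m : ℕ, u a ≤ (((2 * Real.pi)⁻¹ * ∫ θ in (0:ℝ)..(2 * Real.pi),
      trunc u m (a + ((r : ℂ) * Complex.exp (θ * Complex.I)) • b) : ℝ) : EReal)

/-- A plurisubharmonic function on a set `X ⊆ ℂⁿ` (e.g. an analytic subvariety):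
`φ ≢ -∞` on `X`, and near every point of `X`, `φ` is the restriction to `X` of a
plurisubharmonic function on an open neighborhood. Only the values of `φ` on `X` matter. -/
structure PshOnSubset {n : ℕ} (φ : Cn n → EReal) (X : Set (Cn n)) : Prop where
  not_bot : ∃ z ∈ X, φ z ≠ ⊥
  locExt : ∀ z ∈ X, ∃ U : Set (Cn n), IsOpen U ∧ z ∈ U ∧ ∃ v : Cn n → EReal,
    PshOn v U ∧ ∀ w ∈ X ∩ U, φ w = v w

/-- A closed analytic subvariety of `ℂⁿ`. -/
structure IsAnalyticSubvariety {n : ℕ} (X : Set (Cn n)) : Prop where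
  closed : IsClosed X
  locZero : ∀ z ∈ X, ∃ U : Set (Cn n), IsOpen U ∧ z ∈ U ∧ ∃ (k : ℕ) (f : Cn n → Cn k),
    DifferentiableOn ℂ f U ∧ X ∩ U = {w ∈ U | f w = 0}

/-- `u : M → ℝ` is an exhaustion of `M`: all sublevel sets are relatively compact. -/
def ExhaustionOn {n : ℕ} (u : Cn n → ℝ) (M : Set (Cn n)) : Prop :=
  ∀ c : ℝ, Bornology.IsBounded {z ∈ M | u z < c}

end

noncomputable section

/-- The Lelong class `𝓛_γ(X)`: psh functions on `X` with `φ(z) ≤ γ log⁺‖z‖ + C` on `X`.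
(`𝓛_γ(ℂⁿ)` is recovered by taking `X = Set.univ`.) -/
structure MemLelong {n : ℕ} (γ : ℝ) (φ : Cn n → EReal) (X : Set (Cn n)) : Prop where
  psh : PshOnSubset φ X
  growth : ∃ C : ℝ, ∀ z ∈ X, φ z ≤ ((γ * logPlusNorm z + C : ℝ) : EReal)

end

noncomputable section

/-- `log |w|`, with value `-∞` at `w = 0`. -/
def logAbsEReal (w : ℂ) : EReal :=
  if w = 0 then (⊥ : EReal) else ((Real.log ‖w‖ : ℝ) : EReal)

/-! On the curve `x = y³` the monomial `x^⌊j/3⌋ y^(j mod 3)` becomes `y^j`, so `Q_k(y³, y)` is the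
binomial expansion of `(y + 1)^(3k)` and `ψ_k = η` there. The monomials have degree
`⌊j/3⌋ + (j mod 3) ≤ k + 1`, with equality only for `j = 3k - 1`; with `Σ binom(3k, j) = 2^(3k)`
this gives `|Q_k(z)| ≤ 2^(3k) max(‖z‖, 1)^(k+1)`, the growth bound of `𝓛_{(k+1)/(3k)}`.

Plurisubharmonicity of `s log|f|` for holomorphic `f` reduces to complex lines `g(t) = f(a + t b)`.
By Jensen's formula the circle average of `log|g|` is `log|g(0)|` plus a nonnegative contribution
from every zero in the disc; truncating at `-m` only increases the average, and the zeros of `g` on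
the circle, where the truncation sees `-∞`, form a discrete and hence null set. -/

section LogAbsEReal

theorem logAbsEReal_eq_log_enorm (w : ℂ) : logAbsEReal w = ENNReal.log ‖w‖ₑ := by
  by_cases hw : w = 0
  · simp [logAbsEReal, hw]
  · rw [logAbsEReal, if_neg hw, ENNReal.log_pos_real (enorm_ne_zero.mpr hw) enorm_ne_top,
      toReal_enorm]

theorem coe_mul_logAbsEReal_of_ne_zero (s : ℝ) {w : ℂ} (hw : w ≠ 0) :
    (s : EReal) * logAbsEReal w = ((s * Real.log ‖w‖ : ℝ) : EReal) := by
  rw [logAbsEReal, if_neg hw, EReal.coe_mul]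

theorem coe_mul_logAbsEReal_zero {s : ℝ} (hs : 0 < s) :
    (s : EReal) * logAbsEReal 0 = ⊥ := by
  rw [logAbsEReal, if_pos rfl]
  exact EReal.mul_bot_of_pos (mod_cast hs)

theorem coe_mul_logAbsEReal_eq_bot_iff {s : ℝ} (hs : 0 < s) {w : ℂ} :
    (s : EReal) * logAbsEReal w = ⊥ ↔ w = 0 := by
  refine ⟨fun h => ?_, fun h => h ▸ coe_mul_logAbsEReal_zero hs⟩
  by_contra hw
  rw [coe_mul_logAbsEReal_of_ne_zero s hw] at h
  exact EReal.coe_ne_bot _ h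

theorem coe_mul_logAbsEReal_ne_top {s : ℝ} (hs : 0 ≤ s) (w : ℂ) :
    (s : EReal) * logAbsEReal w ≠ ⊤ := by
  by_cases hw : w = 0
  · rcases hs.eq_or_lt with rfl | hs
    · simp
    · rw [hw, coe_mul_logAbsEReal_zero hs]; exact bot_ne_top
  · rw [coe_mul_logAbsEReal_of_ne_zero s hw]
    exact EReal.coe_ne_top _

theorem EReal.continuous_coe_mul {s : ℝ} (hs : s ≠ 0) :
    Continuous fun x : EReal => (s : EReal) * x :=
  have hs' : (s : EReal) ≠ 0 := mod_cast hs
  continuous_iff_continuousAt.2 fun x => (EReal.continuousAt_mul (p := ((s : EReal), x))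
    (.inl hs') (.inl hs') (.inl (EReal.coe_ne_bot s))
    (.inl (EReal.coe_ne_top s))).comp (continuousAt_const.prodMk continuousAt_id)

theorem continuous_coe_mul_logAbsEReal {s : ℝ} (hs : s ≠ 0) :
    Continuous fun w : ℂ => (s : EReal) * logAbsEReal w := by
  simp_rw [logAbsEReal_eq_log_enorm]
  exact (EReal.continuous_coe_mul hs).comp (ENNReal.logHomeomorph.continuous.comp continuous_enorm)

theorem inv_natCast_mul_logAbsEReal_pow {n : ℕ} (hn : n ≠ 0) (w : ℂ) :
    ((1 / n : ℝ) : EReal) * logAbsEReal (w ^ n) = logAbsEReal w := by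
  rw [logAbsEReal_eq_log_enorm, enorm_pow, ENNReal.log_pow, ← mul_assoc, ← logAbsEReal_eq_log_enorm]
  have : ((1 / n : ℝ) : EReal) * (n : EReal) = 1 := by
    rw [show (n : EReal) = ((n : ℝ) : EReal) from rfl, ← EReal.coe_mul, one_div,
      inv_mul_cancel₀ (Nat.cast_ne_zero.mpr hn)]
    rfl
  rw [this, one_mul]

theorem coe_mul_logAbsEReal_le {s A : ℝ} (hs : 0 ≤ s) {w : ℂ} (hw : ‖w‖ ≤ A) :
    (s : EReal) * logAbsEReal w ≤ ((s * Real.log A : ℝ) : EReal) := by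
  by_cases hw0 : w = 0
  · rcases hs.eq_or_lt with rfl | hs
    · simp
    · rw [hw0, coe_mul_logAbsEReal_zero hs]; exact bot_le
  · rw [coe_mul_logAbsEReal_of_ne_zero s hw0, EReal.coe_le_coe_iff]
    exact mul_le_mul_of_nonneg_left (Real.log_le_log (norm_pos_iff.mpr hw0) hw) hs

end LogAbsEReal

section SubMeanValue
open Metric

theorem AnalyticOnNhd.log_norm_le_circleAverage {g : ℂ → ℂ} {c : ℂ} {R : ℝ}
    (hg : AnalyticOnNhd ℂ g (closedBall c |R|)) (hR : R ≠ 0) (hgc : g c ≠ 0) :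
    Real.log ‖g c‖ ≤ Real.circleAverage (fun z => Real.log ‖g z‖) c R := by
  rw [hg.circleAverage_log_norm hR hgc, le_add_iff_nonneg_left]
  refine finsum_nonneg fun u => ?_
  by_cases hu : u ∈ closedBall c |R|
  · refine mul_nonneg (mod_cast MeromorphicOn.AnalyticOnNhd.divisor_nonneg hg u) ?_
    rcases eq_or_ne u c with rfl | huc
    · simp
    · have hcu : 0 < ‖c - u‖ := norm_pos_iff.mpr (sub_ne_zero.mpr huc.symm)
      rw [← Real.log_abs, abs_mul, abs_inv, abs_norm]
      refine Real.log_nonneg ((le_mul_inv_iff₀ hcu).mpr ?_)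
      simpa [dist_eq_norm'] using hu
  · simp [hu]

theorem AnalyticOnNhd.mul_log_norm_le_circleAverage_toReal_max {g : ℂ → ℂ} {c : ℂ} {R : ℝ}
    (hg : AnalyticOnNhd ℂ g (closedBall c |R|)) (hR : R ≠ 0) (hgc : g c ≠ 0) {s : ℝ}
    (hs : 0 ≤ s) (M : ℝ) :
    s * Real.log ‖g c‖ ≤
      Real.circleAverage (fun z => ((s : EReal) * logAbsEReal (g z) ⊔ (M : EReal)).toReal) c R := by
  have hint : CircleIntegrable (fun z => Real.log ‖g z‖) c R :=
    (hg.mono sphere_subset_closedBall).meromorphicOn.circleIntegrable_log_norm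
  have hint' : CircleIntegrable (fun z => s * Real.log ‖g z‖) c R := hint.const_mul s
  have hmax : CircleIntegrable (fun z => max (s * Real.log ‖g z‖) M) c R :=
    ⟨hint'.1.sup (intervalIntegrable_const (c := M)).1,
      hint'.2.sup (intervalIntegrable_const (c := M)).2⟩
  have hzeros : g ⁻¹' {0}ᶜ ∈ codiscreteWithin (sphere c |R|) :=
    codiscreteWithin_mono sphere_subset_closedBall
      (hg.preimage_zero_mem_codiscreteWithin hgc (mem_closedBall_self (abs_nonneg R))
        (isConnected_closedBall (abs_nonneg R)))
  calc s * Real.log ‖g c‖ ≤ s * Real.circleAverage (fun z => Real.log ‖g z‖) c R :=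
        mul_le_mul_of_nonneg_left (hg.log_norm_le_circleAverage hR hgc) hs
    _ = Real.circleAverage (fun z => s * Real.log ‖g z‖) c R :=
        (Real.circleAverage_fun_smul (a := s)).symm
    _ ≤ Real.circleAverage (fun z => max (s * Real.log ‖g z‖) M) c R :=
        Real.circleAverage_mono hint' hmax fun z _ => le_max_left _ _
    _ = _ := by
        refine Real.circleAverage_congr_codiscreteWithin ?_ hR
        filter_upwards [hzeros] with z hz
        rw [coe_mul_logAbsEReal_of_ne_zero s hz, ← EReal.coe_strictMono.monotone.map_max,
          EReal.toReal_coe]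

end SubMeanValue

theorem AnalyticOnNhd.pshOn_coe_mul_logAbsEReal {n : ℕ} {f : Cn n → ℂ} {U : Set (Cn n)}
    (hU : IsOpen U) (hUc : IsPreconnected U) (hf : AnalyticOnNhd ℂ f U) {w : Cn n} (hw : w ∈ U)
    (hfw : f w ≠ 0) {s : ℝ} (hs : 0 < s) :
    PshOn (fun z => (s : EReal) * logAbsEReal (f z)) U where
  isOpen := hU
  usc := ((continuous_coe_mul_logAbsEReal hs.ne').comp_continuousOn
    hf.continuousOn).upperSemicontinuousOn
  ne_top z _ := coe_mul_logAbsEReal_ne_top hs.le (f z)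
  nowhere_bot V hV hVU := by
    rintro ⟨a, ha⟩
    by_contra! hbot
    have hzero : f =ᶠ[𝓝 a] 0 := by
      filter_upwards [hV.mem_nhds ha] with z hz
      exact (coe_mul_logAbsEReal_eq_bot_iff hs).mp (hbot z hz)
    exact hfw (hf.eqOn_zero_of_preconnected_of_eventuallyEq_zero hUc (hVU ha) hzero hw)
  submean a ha b r hr hdisc m := by
    set g : ℂ → ℂ := fun t => f (a + t • b)
    have hg : AnalyticOnNhd ℂ g (Metric.closedBall 0 |r|) := by
      intro t ht
      have hmem : a + t • b ∈ U :=
        hdisc ⟨t, by simpa [abs_of_pos hr] using ht, rfl⟩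
      exact (hf _ hmem).comp_of_eq (by fun_prop) rfl
    by_cases ha0 : f a = 0
    · simp [ha0, coe_mul_logAbsEReal_zero hs]
    have hg0 : g 0 = f a := by simp [g]
    have key := hg.mul_log_norm_le_circleAverage_toReal_max hr.ne' (hg0 ▸ ha0) hs.le (-(m : ℝ))
    rw [hg0, Real.circleAverage_def, smul_eq_mul] at key
    simp only [coe_mul_logAbsEReal_of_ne_zero s ha0, EReal.coe_le_coe_iff]
    simpa [trunc, circleMap, g] using key

theorem norm_apply_le_enorm2 {n : ℕ} (z : Cn n) (i : Fin n) : ‖z i‖ ≤ enorm2 z :=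
  Real.le_sqrt_of_sq_le (Finset.single_le_sum (f := fun j => ‖z j‖ ^ 2)
    (fun _ _ => sq_nonneg _) (Finset.mem_univ i))

theorem logPlusNorm_eq_log_max_one {n : ℕ} (z : Cn n) :
    logPlusNorm z = Real.log (max (enorm2 z) 1) := by
  rcases le_total 1 (enorm2 z) with h | h
  · rw [logPlusNorm, max_eq_left h, max_eq_left (Real.log_nonneg h)]
  · have h0 : 0 ≤ enorm2 z := Real.sqrt_nonneg _
    rw [logPlusNorm, max_eq_right h, Real.log_one, max_eq_right (Real.log_nonpos h0 h)]

theorem PshOn.memLelong_univ {n : ℕ} {γ : ℝ} {u : Cn n → EReal} (hu : PshOn u univ)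
    (hgrowth : ∃ C : ℝ, ∀ z, u z ≤ ((γ * logPlusNorm z + C : ℝ) : EReal)) :
    MemLelong γ u univ where
  psh :=
    { not_bot := hu.nowhere_bot univ isOpen_univ subset_rfl univ_nonempty
      locExt := fun z _ => ⟨univ, isOpen_univ, mem_univ z, u, hu, fun _ _ => rfl⟩ }
  growth := hgrowth.imp fun _ hC z _ => hC z

section BinomCubeLift
open MvPolynomial

def binomCubeLift (k : ℕ) : MvPolynomial (Fin 2) ℂ :=
  ∑ j ∈ Finset.range (3 * k + 1),
    C ((Nat.choose (3 * k) j : ℂ)) * X 0 ^ (j / 3) * X 1 ^ (j % 3)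

theorem MvPolynomial.C_mul_X_pow_mul_X_pow {R σ : Type*} [CommSemiring R] (c : R) (i j : σ)
    (a b : ℕ) : C c * X i ^ a * X j ^ b = monomial (Finsupp.single i a + Finsupp.single j b) c := by
  rw [X_pow_eq_monomial, X_pow_eq_monomial, C_apply, monomial_mul, monomial_mul, zero_add, mul_one,
    mul_one]

theorem eval_binomCubeLift_cube (k : ℕ) (y : ℂ) :
    eval ![y ^ 3, y] (binomCubeLift k) = (y + 1) ^ (3 * k) := by
  rw [binomCubeLift, map_sum, add_pow]
  refine Finset.sum_congr rfl fun j _ => ?_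
  simp only [map_mul, map_pow, eval_C, eval_X, Matrix.cons_val_zero, Matrix.cons_val_one,
    one_pow, mul_one]
  rw [← pow_mul, mul_assoc, ← pow_add, show 3 * (j / 3) + j % 3 = j by omega, mul_comm]

theorem coeff_binomCubeLift {k : ℕ} (hk : 1 ≤ k) :
    coeff (Finsupp.single 0 (k - 1) + Finsupp.single 1 2) (binomCubeLift k) = (3 * k : ℂ) := by
  rw [binomCubeLift, coeff_sum, Finset.sum_eq_single (3 * k - 1)]
  · rw [C_mul_X_pow_mul_X_pow, show (3 * k - 1) / 3 = k - 1 by omega,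
      show (3 * k - 1) % 3 = 2 by omega, coeff_monomial, if_pos rfl,
      Nat.choose_symm_of_eq_add (show 3 * k = (3 * k - 1) + 1 by omega), Nat.choose_one_right]
    push_cast; ring
  · intro j _ hj
    rw [C_mul_X_pow_mul_X_pow, coeff_monomial, if_neg]
    intro h
    have h0 := congrArg (· 0) h
    have h1 := congrArg (· 1) h
    simp only [Finsupp.add_apply, Finsupp.single_apply, zero_ne_one, one_ne_zero, if_true,
      if_false, add_zero, zero_add] at h0 h1
    omega
  · intro h
    exact absurd (Finset.mem_range.mpr (by omega)) h

theorem totalDegree_binomCubeLift {k : ℕ} (hk : 1 ≤ k) : (binomCubeLift k).totalDegree = k + 1 := by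
  have hdeg (a b : ℕ) : (Finsupp.single (0 : Fin 2) a + Finsupp.single 1 b).sum (fun _ e => e)
      = a + b := by
    rw [Finsupp.sum_add_index' (fun _ => rfl) (fun _ _ _ => rfl), Finsupp.sum_single_index rfl,
      Finsupp.sum_single_index rfl]
  refine le_antisymm ?_ ?_
  · refine (totalDegree_finsetSum _ _).trans (Finset.sup_le fun j hj => ?_)
    rw [Finset.mem_range] at hj
    rw [C_mul_X_pow_mul_X_pow]
    exact (totalDegree_monomial_le _ _).trans ((hdeg _ _).trans_le (by omega))
  · have hne : coeff (Finsupp.single 0 (k - 1) + Finsupp.single 1 2) (binomCubeLift k) ≠ 0 := by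
      rw [coeff_binomCubeLift hk]
      exact_mod_cast (by omega : 3 * k ≠ 0)
    have := le_totalDegree (mem_support_iff.mpr hne)
    rw [hdeg] at this
    omega

theorem norm_eval_binomCubeLift_le (k : ℕ) (z : Cn 2) :
    ‖eval z (binomCubeLift k)‖ ≤ 2 ^ (3 * k) * max (enorm2 z) 1 ^ (k + 1) := by
  set N := max (enorm2 z) 1
  have hN : 1 ≤ N := le_max_right _ _
  have hz (i : Fin 2) : ‖z i‖ ≤ N := (norm_apply_le_enorm2 z i).trans (le_max_left _ _)
  rw [binomCubeLift, map_sum]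
  calc ‖∑ j ∈ Finset.range (3 * k + 1), eval z (C ((Nat.choose (3 * k) j : ℂ)) *
          X 0 ^ (j / 3) * X 1 ^ (j % 3))‖
      ≤ ∑ j ∈ Finset.range (3 * k + 1), (Nat.choose (3 * k) j : ℝ) * N ^ (k + 1) := by
        refine (norm_sum_le _ _).trans (Finset.sum_le_sum fun j hj => ?_)
        rw [Finset.mem_range] at hj
        simp only [map_mul, map_pow, eval_C, eval_X, norm_mul, norm_pow, Complex.norm_natCast,
          mul_assoc]
        gcongr
        calc ‖z 0‖ ^ (j / 3) * ‖z 1‖ ^ (j % 3) ≤ N ^ (j / 3) * N ^ (j % 3) := by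
              gcongr <;> exact hz _
          _ ≤ N ^ (k + 1) := by rw [← pow_add]; exact pow_le_pow_right₀ hN (by omega)
    _ = 2 ^ (3 * k) * N ^ (k + 1) := by
        rw [← Finset.sum_mul, ← Nat.cast_sum, Nat.sum_range_choose]
        push_cast
        ring

theorem coe_mul_logAbsEReal_eval_binomCubeLift_le {k : ℕ} (hk : 1 ≤ k) (z : Cn 2) :
    ((1 / (3 * k) : ℝ) : EReal) * logAbsEReal (eval z (binomCubeLift k)) ≤
      (((k + 1) / (3 * k) * logPlusNorm z + Real.log 2 : ℝ) : EReal) := by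
  have hk' : (0 : ℝ) < k := by exact_mod_cast hk
  refine (coe_mul_logAbsEReal_le (by positivity) (norm_eval_binomCubeLift_le k z)).trans_eq ?_
  rw [EReal.coe_eq_coe_iff, logPlusNorm_eq_log_max_one,
    Real.log_mul (by positivity) (by positivity), Real.log_pow, Real.log_pow]
  field_simp
  push_cast
  ring

theorem coe_mul_logAbsEReal_eval_binomCubeLift_of_eq_cube {k : ℕ} (hk : 1 ≤ k) {z : Cn 2}
    (hz : z 0 = z 1 ^ 3) :
    ((1 / (3 * k) : ℝ) : EReal) * logAbsEReal (eval z (binomCubeLift k)) =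
      logAbsEReal (1 + z 1) := by
  have hz' : z = ![z 1 ^ 3, z 1] := by
    ext i; fin_cases i <;> simp [hz]
  have heval : eval z (binomCubeLift k) = (1 + z 1) ^ (3 * k) := by
    rw [hz', eval_binomCubeLift_cube, add_comm]
    simp
  rw [heval, show (1 / (3 * k) : ℝ) = 1 / ((3 * k : ℕ) : ℝ) by push_cast; rfl]
  exact inv_natCast_mul_logAbsEReal_pow (by omega) _

end BinomCubeLift

open MvPolynomial in
/-- For every integer `k ≥ 1`, the polynomial
`Q_k(x, y) = Σ_{j=0}^{3k} C(3k, j) x^{⌊j/3⌋} y^{j mod 3}` has total degree `k + 1`, satisfies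
`Q_k(y³, y) = (y + 1)^{3k}` for all `y ∈ ℂ`, and has leading term `3k·x^{k−1} y²`.
Consequently, for `X = {(x,y) ∈ ℂ² : x = y³}` and `η(x, y) = log|1 + y|`, the function
`ψ_k = (1/(3k)) log|Q_k|` belongs to `𝓛_{(k+1)/(3k)}(ℂ²)` and satisfies `ψ_k = η` on `X`. -/
theorem stmt17 (k : ℕ) (hk : 1 ≤ k) :
    let Q : MvPolynomial (Fin 2) ℂ :=
      ∑ j ∈ Finset.range (3 * k + 1),
        MvPolynomial.C ((Nat.choose (3 * k) j : ℂ)) *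
          MvPolynomial.X 0 ^ (j / 3) * MvPolynomial.X 1 ^ (j % 3)
    let X : Set (Cn 2) := {z | z 0 = z 1 ^ 3}
    let η : Cn 2 → EReal := fun z => logAbsEReal (1 + z 1)
    let ψk : Cn 2 → EReal := fun z =>
      ((1 / (3 * k) : ℝ) : EReal) * logAbsEReal (MvPolynomial.eval z Q)
    Q.totalDegree = k + 1 ∧
    (∀ y : ℂ, MvPolynomial.eval ![y ^ 3, y] Q = (y + 1) ^ (3 * k)) ∧
    MvPolynomial.coeff (Finsupp.single (0 : Fin 2) (k - 1) + Finsupp.single (1 : Fin 2) 2) Q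
      = (3 * k : ℂ) ∧
    MemLelong ((k + 1) / (3 * k)) ψk Set.univ ∧
    (∀ z ∈ X, ψk z = η z) := by
  intro Q X η ψk
  have hQ : Q = binomCubeLift k := rfl
  have hk' : (0 : ℝ) < 1 / (3 * k) := by
    have : (0 : ℝ) < k := by exact_mod_cast hk
    positivity
  have hQ0 : eval ![0 ^ 3, 0] Q ≠ 0 := by
    rw [hQ, eval_binomCubeLift_cube]
    simp
  refine ⟨totalDegree_binomCubeLift hk, eval_binomCubeLift_cube k, coeff_binomCubeLift hk, ?_,
    fun z hz => coe_mul_logAbsEReal_eval_binomCubeLift_of_eq_cube hk hz⟩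
  refine PshOn.memLelong_univ ?_ ⟨Real.log 2, coe_mul_logAbsEReal_eval_binomCubeLift_le hk⟩
  exact (AnalyticOnNhd.eval_mvPolynomial Q).pshOn_coe_mul_logAbsEReal isOpen_univ
    isPreconnected_univ (mem_univ _) hQ0 hk'
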